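/- arXiv:math/0610395 — 2 statements merged into one kernel-verified Lean document; each statement's English description precedes it below -/
import Mathlib

section
/- For real numbers a, c with 1 + c ≠ 0, the three conditions (i) 1 + c·e^{2iθ} ≠ 0 for all θ ∈ [0,2π]; (ii) 2a/(1+c) > 0; (iii) iy(1 + c·e^{2iθ}) + a + a·e^{iθ} ≠ 0 for all θ ∈ [0,2π] and all nonzero real y, hold simultaneously if and only if a > 0 and −1 < c ≤ 1/3. -/
open Complex Real

/-!
Write `z = e^{iθ}`. Condition (i) fails exactly when `|c| = 1`. Splitting (iii) into real and
imaginary parts and eliminating `a` gives `y (1 + cos θ) (1 - c + 2c cos θ) = 0`. For `y ≠ 0`,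
`cos θ = -1` forces `y (1 + c) = 0`, so a root needs `cos θ = (c - 1) / (2c)`; this value lies in
`(-1, 1)` exactly when `c < -1` or `c > 1/3`, and then an explicit `y` produces a root.
Finally (ii) says that `a` has the sign of `1 + c`.
-/

/-- `s (1 + c e^{-2sτ}) + a + a e^{-sτ}` at `s = iy`, with `e^{-sτ}` replaced by a free point
`e^{iθ}` of the unit circle. -/
noncomputable def neutralChar (a c θ y : ℝ) : ℂ :=
  y * I * (1 + c * exp (2 * θ * I)) + a + a * exp (θ * I)

theorem one_add_mul_exp_ne_zero_iff (c : ℝ) :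
    (∀ θ ∈ Set.Icc (0 : ℝ) (2 * π), 1 + (c : ℂ) * exp (2 * θ * I) ≠ 0) ↔ |c| ≠ 1 := by
  constructor
  · intro h hc
    rcases abs_eq (zero_le_one' ℝ) |>.1 hc with rfl | rfl
    · refine h (π / 2) ⟨by positivity, by linarith [pi_pos]⟩ ?_
      rw [show (2 : ℂ) * ↑(π / 2) * I = π * I by push_cast; ring, exp_pi_mul_I]
      push_cast; ring
    · exact h 0 ⟨le_rfl, by positivity⟩ (by simp)
  · intro hc θ _ h
    have hnorm := congrArg norm (eq_neg_of_add_eq_zero_right h)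
    rw [norm_mul, show (2 : ℂ) * θ * I = ((2 * θ : ℝ) : ℂ) * I by push_cast; ring,
      norm_exp_ofReal_mul_I, norm_real, norm_eq_abs, norm_neg, norm_one, mul_one] at hnorm
    exact hc hnorm

section neutralChar

variable {a c θ y : ℝ}

theorem neutralChar_re :
    (neutralChar a c θ y).re = a * (1 + Real.cos θ) - 2 * y * c * Real.sin θ * Real.cos θ := by
  rw [neutralChar, show (2 : ℂ) * θ * I = ((2 * θ : ℝ) : ℂ) * I by push_cast; ring]
  simp only [add_re, mul_re, add_im, mul_im, ofReal_re, ofReal_im, I_re, I_im, one_re, one_im,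
    exp_ofReal_mul_I_re, exp_ofReal_mul_I_im, Real.sin_two_mul]
  ring

theorem neutralChar_im :
    (neutralChar a c θ y).im = y * (1 + c * (2 * Real.cos θ ^ 2 - 1)) + a * Real.sin θ := by
  rw [neutralChar, show (2 : ℂ) * θ * I = ((2 * θ : ℝ) : ℂ) * I by push_cast; ring]
  simp only [add_re, mul_re, add_im, mul_im, ofReal_re, ofReal_im, I_re, I_im, one_re, one_im,
    exp_ofReal_mul_I_re, exp_ofReal_mul_I_im, Real.cos_two_mul]
  ring

theorem neutralChar_eq_zero_iff :
    neutralChar a c θ y = 0 ↔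
      a * (1 + Real.cos θ) - 2 * y * c * Real.sin θ * Real.cos θ = 0 ∧
        y * (1 + c * (2 * Real.cos θ ^ 2 - 1)) + a * Real.sin θ = 0 := by
  rw [Complex.ext_iff, neutralChar_re, neutralChar_im, zero_re, zero_im]

theorem mul_one_add_cos_mul_eq_zero_of_neutralChar_eq_zero (h : neutralChar a c θ y = 0) :
    y * (1 + Real.cos θ) * (1 - c + 2 * c * Real.cos θ) = 0 := by
  obtain ⟨hre, him⟩ := neutralChar_eq_zero_iff.1 h
  linear_combination (1 + Real.cos θ) * him - Real.sin θ * hre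
    - 2 * y * c * Real.cos θ * Real.sin_sq_add_cos_sq θ

theorem neutralChar_ne_zero (hc : -1 < c) (hc' : c ≤ 1 / 3) (hy : y ≠ 0) :
    neutralChar a c θ y ≠ 0 := by
  intro h
  have hfactor := mul_one_add_cos_mul_eq_zero_of_neutralChar_eq_zero h
  rw [mul_assoc, mul_eq_zero, or_iff_right hy] at hfactor
  -- `1 - c + 2c·cos θ` is affine in `cos θ`, equal to `1 - 3c ≥ 0` at `-1` and `1 + c > 0` at `1`
  have hcos : Real.cos θ = -1 := by
    rcases mul_eq_zero.1 hfactor with h | h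
    · linarith
    · have hle : 0 ≤ (1 - Real.cos θ) * (1 - 3 * c) :=
        mul_nonneg (sub_nonneg.2 (Real.cos_le_one θ)) (by linarith)
      nlinarith [mul_nonneg (neg_le_iff_add_nonneg'.1 (Real.neg_one_le_cos θ))
        (neg_le_iff_add_nonneg'.1 hc.le)]
  have hsin : Real.sin θ = 0 := by
    nlinarith [Real.sin_sq_add_cos_sq θ]
  have him := (neutralChar_eq_zero_iff.1 h).2
  rw [hcos, hsin] at him
  have hy' : y * (1 + c) = 0 := by linear_combination him
  exact hy ((mul_eq_zero.1 hy').resolve_right (by linarith))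

theorem neutralChar_eq_zero_of_two_mul_cos (hc : c ≠ 1) (hsin : Real.sin θ ≠ 0)
    (hcos : 2 * c * Real.cos θ = c - 1) :
    neutralChar a c θ (a * (1 + Real.cos θ) / ((c - 1) * Real.sin θ)) = 0 := by
  have hc' : c - 1 ≠ 0 := sub_ne_zero.2 hc
  rw [neutralChar_eq_zero_iff]
  constructor
  · field_simp
    linear_combination (-a * (1 + Real.cos θ)) * hcos
  · field_simp
    linear_combination a * (1 + Real.cos θ) * Real.cos θ * hcos
      + a * (c - 1) * Real.sin_sq_add_cos_sq θ

theorem exists_mem_Ioo_two_mul_mul_eq_sub_one (hc : c < -1 ∨ 1 / 3 < c) :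
    ∃ t ∈ Set.Ioo (-1 : ℝ) 1, 2 * c * t = c - 1 := by
  have hc0 : c ≠ 0 := by rintro rfl; norm_num at hc
  refine ⟨(c - 1) / (2 * c), ⟨?_, ?_⟩, by field_simp⟩
  · rcases hc with hc | hc
    · rw [lt_div_iff_of_neg (by linarith)]; linarith
    · rw [lt_div_iff₀ (by linarith)]; linarith
  · rcases hc with hc | hc
    · rw [div_lt_iff_of_neg (by linarith)]; linarith
    · rw [div_lt_iff₀ (by linarith)]; linarith

theorem exists_neutralChar_eq_zero (ha : a ≠ 0) (hc : c ≠ 1) {t : ℝ} (ht : t ∈ Set.Ioo (-1) 1)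
    (hct : 2 * c * t = c - 1) :
    ∃ θ ∈ Set.Icc (0 : ℝ) (2 * π), ∃ y : ℝ, y ≠ 0 ∧ neutralChar a c θ y = 0 := by
  have hsin : 0 < Real.sin (arccos t) := by
    rw [sin_arccos]
    exact Real.sqrt_pos.2 (by nlinarith [ht.1, ht.2])
  have hcos : Real.cos (arccos t) = t := cos_arccos ht.1.le ht.2.le
  refine ⟨arccos t, ⟨arccos_nonneg t, (arccos_le_pi t).trans (by linarith [pi_pos])⟩, _,
    ?_, neutralChar_eq_zero_of_two_mul_cos hc hsin.ne' (by rw [hcos, hct])⟩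
  rw [hcos]
  exact div_ne_zero (mul_ne_zero ha (by linarith [ht.1])) (mul_ne_zero (sub_ne_zero.2 hc) hsin.ne')

end neutralChar

theorem scalar_neutral_two_delay_stable_general (a c : ℝ) :
    ((∀ θ ∈ Set.Icc (0 : ℝ) (2 * π), 1 + (c : ℂ) * Complex.exp (2 * θ * I) ≠ 0) ∧
      2 * a / (1 + c) > 0 ∧
      (∀ θ ∈ Set.Icc (0 : ℝ) (2 * π), ∀ y : ℝ, y ≠ 0 →
        (y : ℂ) * I * (1 + (c : ℂ) * Complex.exp (2 * θ * I)) + (a : ℂ) +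
          (a : ℂ) * Complex.exp (θ * I) ≠ 0)) ↔
    (a > 0 ∧ -1 < c ∧ c ≤ 1 / 3) := by
  constructor
  · rintro ⟨hunit, hpos, hroots⟩
    obtain ⟨hc_neg, hc_pos⟩ : c ≠ -1 ∧ c ≠ 1 := by
      have := (one_add_mul_exp_ne_zero_iff c).1 hunit
      constructor <;> rintro rfl <;> norm_num at this
    have ha : a ≠ 0 := by rintro rfl; simp at hpos
    have hc : -1 < c ∧ c ≤ 1 / 3 := by
      by_contra! hout
      have hout' : c < -1 ∨ 1 / 3 < c := (lt_or_gt_of_ne hc_neg).imp_right hout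
      obtain ⟨t, ht, hct⟩ := exists_mem_Ioo_two_mul_mul_eq_sub_one hout'
      obtain ⟨θ, hθ, y, hy, hroot⟩ := exists_neutralChar_eq_zero ha hc_pos ht hct
      exact hroots θ hθ y hy hroot
    refine ⟨?_, hc⟩
    rcases div_pos_iff.1 hpos with ⟨h, -⟩ | ⟨-, h⟩ <;> linarith
  · rintro ⟨ha, hc, hc'⟩
    refine ⟨(one_add_mul_exp_ne_zero_iff c).2 ?_, div_pos (by linarith) (by linarith),
      fun θ _ y hy => neutralChar_ne_zero hc hc' hy⟩
    exact (abs_lt.2 ⟨hc, by linarith⟩).ne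

/-- For real `a, c` with `1+c ≠ 0`, the three conditions characterizing
delay-independent stability of `ẋ(t)+c·ẋ(t-2τ)+a·x(t)+a·x(t-τ)=0` hold
simultaneously iff `a > 0` and `-1 < c ≤ 1/3`. -/
theorem scalar_neutral_two_delay_stable (a c : ℝ) (hc : 1 + c ≠ 0) :
    ((∀ θ ∈ Set.Icc (0 : ℝ) (2 * π), 1 + (c : ℂ) * Complex.exp (2 * θ * I) ≠ 0) ∧
      2 * a / (1 + c) > 0 ∧
      (∀ θ ∈ Set.Icc (0 : ℝ) (2 * π), ∀ y : ℝ, y ≠ 0 →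
        (y : ℂ) * I * (1 + (c : ℂ) * Complex.exp (2 * θ * I)) + (a : ℂ) +
          (a : ℂ) * Complex.exp (θ * I) ≠ 0)) ↔
    (a > 0 ∧ -1 < c ∧ c ≤ 1 / 3) :=
  scalar_neutral_two_delay_stable_general a c
end

section
/- Let F(z,y) = a + 2yz − 2cyz + az² + a(1−z²) and G(z,y) = y(1−z²) − 2az + cy(1−z²) with a > 0 and −1 < c ≤ 1/3. Then there is no pair (z,y) with z ∈ ℝ and y ∈ ℝ \ {0} satisfying F(z,y) = 0 and G(z,y) = 0. -/
/-- For `a > 0` and `-1 < c ≤ 1/3`, the polynomials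
`F(z,y) = a + 2yz − 2cyz + az² + a(1−z²)` and
`G(z,y) = y(1−z²) − 2az + cy(1−z²)` have no common zero with `z ∈ ℝ`,
`y ∈ ℝ \ {0}`. -/
theorem no_common_zero_F_G_two_delay (a c : ℝ) (ha : a > 0)
    (hc₁ : -1 < c) (hc₂ : c ≤ 1 / 3) :
    ¬ ∃ z y : ℝ, y ≠ 0 ∧
        a + 2 * y * z - 2 * c * y * z + a * z ^ 2 + a * (1 - z ^ 2) = 0 ∧
        y * (1 - z ^ 2) - 2 * a * z + c * y * (1 - z ^ 2) = 0 := by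
  rintro ⟨z, y, hy, hF, hG⟩
  have h1 : y * z * (1 - c) = -a := by nlinarith [hF]
  have h2 : y * z * (1 + c) * (1 - z ^ 2) = 2 * a * z ^ 2 := by
    nlinarith [mul_eq_zero_of_left hG z]
  have h3 : y * z * (1 - c) * ((1 + c) * (1 - z ^ 2)) = -a * ((1 + c) * (1 - z ^ 2)) := by
    rw [h1]
  have h4 : y * z * (1 + c) * (1 - z ^ 2) * (1 - c) = 2 * a * z ^ 2 * (1 - c) := by
    rw [h2]
  -- hence -a(1+c)(1-z²) = 2a(1-c)z², i.e. a(1+c) + a(1-3c)z² = 0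
  have h5 : a * (1 + c) + a * (1 - 3 * c) * z ^ 2 = 0 := by nlinarith [h3, h4]
  have p1 : a * (1 + c) > 0 := mul_pos ha (by linarith)
  have p2 : a * (1 - 3 * c) * z ^ 2 ≥ 0 :=
    mul_nonneg (mul_nonneg ha.le (by linarith)) (sq_nonneg z)
  linarith
end
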